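/- Let m, n ≥ 2 be integers. The graph semiring of the disjoint union of one path with n + 1 vertices and m paths with n vertices each (the {0, ω}-direct union S_{p_{n+1}} ∘ ⋃_{1≤i≤m}^{ω} S_{p_n}) is a homomorphic image of a subsemiring of the m-th direct power S_{p_{n+1}}^m. -/

import Mathlib

universe u v

-- The underlying set of the graph semiring of a graph with vertex set `V`:
-- the vertices together with two extra elements `0` and `ω`.
inductive GS (V : Type u) : Type u where
  | zero : GS V
  | omega : GS V
  | vert : V → GS V

-- Multiplication of the graph semiring: `x·y = ω` if `x, y` are vertices joined by an
-- edge, and `x·y = 0` otherwise.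
open Classical in
noncomputable def gsMul {V : Type u} (E : V → V → Prop) : GS V → GS V → GS V
  | GS.vert a, GS.vert b => if E a b then GS.omega else GS.zero
  | _, _ => GS.zero

-- The flat addition of the graph semiring: `a + b = a` if `a = b`, else `0`.
open Classical in
noncomputable def gsAdd {V : Type u} (a b : GS V) : GS V :=
  if a = b then a else GS.zero

-- `gsSum f n = f 0 + f 1 + ⋯ + f n` (a sum of `n + 1` terms).
noncomputable def gsSum {V : Type u} (f : ℕ → GS V) : ℕ → GS V
  | 0 => f 0
  | n + 1 => gsAdd (gsSum f n) (f (n + 1))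

-- `E` is a graph (in the sense of the paper): a directed graph with no isolated
-- vertices in which every vertex has out-degree at most 1 and in-degree at most 1.
def IsGraph {V : Type u} (E : V → V → Prop) : Prop :=
  (∀ v : V, ∃ u : V, E v u ∨ E u v) ∧
  (∀ v a b : V, E v a → E v b → a = b) ∧
  (∀ v a b : V, E a v → E b v → a = b)

-- `v 0, v 1, …, v (m - 1)` is a path of the graph `E` with `m` vertices.
def IsPathOn {V : Type u} (E : V → V → Prop) (m : ℕ) (v : ℕ → V) : Prop :=
  (∀ i < m, ∀ j < m, v i = v j → i = j) ∧
  (∀ i : ℕ, i + 1 < m → E (v i) (v (i + 1)))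

-- `v 0, v 1, …, v (m - 1)` is a cycle of the graph `E` of length `m`.
def IsCycleOn {V : Type u} (E : V → V → Prop) (m : ℕ) (v : ℕ → V) : Prop :=
  1 ≤ m ∧
  (∀ i < m, ∀ j < m, v i = v j → i = j) ∧
  (∀ i : ℕ, i + 1 < m → E (v i) (v (i + 1))) ∧
  E (v (m - 1)) (v 0)

-- `B` (with operations `addB`, `mulB`) is a homomorphic image of a subsemiring of `A`
-- (with operations `addA`, `mulA`): there is a subset of `A` closed under both
-- operations and a surjection from it onto `B` preserving both operations.
def IsHomImageOfSub {A : Type u} {B : Type v}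
    (addA mulA : A → A → A) (addB mulB : B → B → B) : Prop :=
  ∃ (T : Set A) (φ : A → B),
    (∀ x ∈ T, ∀ y ∈ T, addA x y ∈ T ∧ mulA x y ∈ T) ∧
    (∀ b : B, ∃ x ∈ T, φ x = b) ∧
    (∀ x ∈ T, ∀ y ∈ T,
      φ (addA x y) = addB (φ x) (φ y) ∧ φ (mulA x y) = mulB (φ x) (φ y))

-- The edge relation of the path with vertices `a_1, …, a_k` (as `Fin k`).
def pathE (k : ℕ) : Fin k → Fin k → Prop := fun i j => (j : ℕ) = (i : ℕ) + 1

-- The edge relation of the disjoint union of one path with `n + 1` vertices and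
-- `m` paths with `n` vertices each.
def unionPathE19 (m n : ℕ) :
    (Fin (n + 1) ⊕ (Fin m × Fin n)) → (Fin (n + 1) ⊕ (Fin m × Fin n)) → Prop :=
  fun p q =>
    match p, q with
    | Sum.inl i, Sum.inl j => (j : ℕ) = (i : ℕ) + 1
    | Sum.inr a, Sum.inr b => a.1 = b.1 ∧ (b.2 : ℕ) = (a.2 : ℕ) + 1
    | _, _ => False

/-! Send a vertex of the union to a tuple of vertices of `p_{n+1}`: a vertex `a_j` of the long
path to the constant tuple `(a_j, …, a_j)`, and the vertex `a_j` of the `k`-th short path to the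
tuple with `a_{j+1}` at coordinate `k` and `a_j` elsewhere. For `m ≥ 2` this is an embedding of
the union as an induced subgraph of the `m`-th categorical power of `p_{n+1}`: two tuples are
joined in every coordinate exactly when the two vertices are joined. The image tuples, together
with `ω` and the ideal of tuples having a `0` entry, then form a subsemiring of `S_{p_{n+1}}^m`,
and collapsing that ideal to `0` (a Rees quotient) yields the graph semiring of the union. -/

section GraphSemiring

variable {V : Type u} {E : V → V → Prop}

theorem gsAdd_self (a : GS V) : gsAdd a a = a := by simp [gsAdd]

theorem gsAdd_of_ne {a b : GS V} (h : a ≠ b) : gsAdd a b = GS.zero := by simp [gsAdd, h]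

theorem gsAdd_zero_left (b : GS V) : gsAdd GS.zero b = GS.zero := by
  unfold gsAdd; split_ifs <;> rfl

theorem gsAdd_zero_right (a : GS V) : gsAdd a GS.zero = GS.zero := by
  unfold gsAdd; split_ifs with h <;> [exact h; rfl]

theorem gsMul_zero_left (b : GS V) : gsMul E GS.zero b = GS.zero := rfl

theorem gsMul_zero_right (a : GS V) : gsMul E a GS.zero = GS.zero := by cases a <;> rfl

theorem gsMul_vert_of_adj {a b : V} (h : E a b) :
    gsMul E (GS.vert a) (GS.vert b) = GS.omega := by
  simp [gsMul, h]

theorem gsMul_vert_of_not_adj {a b : V} (h : ¬E a b) :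
    gsMul E (GS.vert a) (GS.vert b) = GS.zero := by
  simp [gsMul, h]

end GraphSemiring

section ReesQuotient

variable {A : Type u} {B : Type v} (ψ : B → A) (b₀ : B)

noncomputable def reesProj (x : A) : B := (Function.partialInv ψ x).getD b₀

variable {ψ b₀} {Z : Set A}

theorem reesProj_apply (hψ : ψ.Injective) (b : B) : reesProj ψ b₀ (ψ b) = b := by
  simp [reesProj, Function.partialInv_left hψ]

theorem reesProj_of_mem (hψ : ψ.Injective) (hZ : ∀ b, ψ b ∈ Z ↔ b = b₀) {x : A} (hx : x ∈ Z) :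
    reesProj ψ b₀ x = b₀ := by
  unfold reesProj
  cases h : Function.partialInv ψ x with
  | none => rfl
  | some b =>
    obtain rfl : ψ b = x := (hψ.isPartialInv b x).mp h
    exact (hZ b).mp hx

theorem reesProj_op (opA : A → A → A) (opB : B → B → B) (hψ : ψ.Injective)
    (hZ : ∀ b, ψ b ∈ Z ↔ b = b₀) (hZ_ideal : ∀ z ∈ Z, ∀ x, opA z x ∈ Z ∧ opA x z ∈ Z)
    (hb₀ : ∀ b, opB b₀ b = b₀ ∧ opB b b₀ = b₀)
    (hcompat : ∀ b b', opA (ψ b) (ψ b') = ψ (opB b b') ∨ (opB b b' = b₀ ∧ opA (ψ b) (ψ b') ∈ Z))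
    {x y : A} (hx : x ∈ Set.range ψ ∪ Z) (hy : y ∈ Set.range ψ ∪ Z) :
    opA x y ∈ Set.range ψ ∪ Z ∧
      reesProj ψ b₀ (opA x y) = opB (reesProj ψ b₀ x) (reesProj ψ b₀ y) := by
  rcases hx with ⟨b, rfl⟩ | hx
  · rcases hy with ⟨b', rfl⟩ | hy
    · rw [reesProj_apply hψ, reesProj_apply hψ]
      rcases hcompat b b' with h | ⟨h₀, hZ'⟩
      · exact ⟨Or.inl ⟨_, h.symm⟩, by rw [h, reesProj_apply hψ]⟩
      · exact ⟨Or.inr hZ', by rw [reesProj_of_mem hψ hZ hZ', h₀]⟩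
    · have hxy := (hZ_ideal y hy (ψ b)).2
      exact ⟨Or.inr hxy, by rw [reesProj_of_mem hψ hZ hxy, reesProj_of_mem hψ hZ hy, (hb₀ _).2]⟩
  · have hxy := (hZ_ideal x hx y).1
    exact ⟨Or.inr hxy, by rw [reesProj_of_mem hψ hZ hxy, reesProj_of_mem hψ hZ hx, (hb₀ _).1]⟩

theorem isHomImageOfSub_of_rees {addA mulA : A → A → A} {addB mulB : B → B → B}
    (hψ : ψ.Injective) (hZ : ∀ b, ψ b ∈ Z ↔ b = b₀)
    (hZ_add : ∀ z ∈ Z, ∀ x, addA z x ∈ Z ∧ addA x z ∈ Z)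
    (hZ_mul : ∀ z ∈ Z, ∀ x, mulA z x ∈ Z ∧ mulA x z ∈ Z)
    (hb₀_add : ∀ b, addB b₀ b = b₀ ∧ addB b b₀ = b₀)
    (hb₀_mul : ∀ b, mulB b₀ b = b₀ ∧ mulB b b₀ = b₀)
    (hcompat_add : ∀ b b', addA (ψ b) (ψ b') = ψ (addB b b') ∨
      (addB b b' = b₀ ∧ addA (ψ b) (ψ b') ∈ Z))
    (hcompat_mul : ∀ b b', mulA (ψ b) (ψ b') = ψ (mulB b b') ∨
      (mulB b b' = b₀ ∧ mulA (ψ b) (ψ b') ∈ Z)) :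
    IsHomImageOfSub addA mulA addB mulB := by
  have hadd {x y : A} := reesProj_op (x := x) (y := y) addA addB hψ hZ hZ_add hb₀_add hcompat_add
  have hmul {x y : A} := reesProj_op (x := x) (y := y) mulA mulB hψ hZ hZ_mul hb₀_mul hcompat_mul
  exact ⟨Set.range ψ ∪ Z, reesProj ψ b₀, fun x hx y hy => ⟨(hadd hx hy).1, (hmul hx hy).1⟩,
    fun b => ⟨ψ b, Or.inl ⟨b, rfl⟩, reesProj_apply hψ b⟩,
    fun x hx y hy => ⟨(hadd hx hy).2, (hmul hx hy).2⟩⟩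

end ReesQuotient

section InducedEmbedding

variable {U : Type u} {V : Type v} {I : Type*} {EU : U → U → Prop} {EV : V → V → Prop}

def gsPi (e : I → U → V) : GS U → I → GS V
  | GS.zero => fun _ => GS.zero
  | GS.omega => fun _ => GS.omega
  | GS.vert u => fun i => GS.vert (e i u)

theorem gsPi_injective [Nonempty I] {e : I → U → V} (he : (fun u i => e i u).Injective) :
    (gsPi e).Injective := by
  obtain ⟨i⟩ := ‹Nonempty I›
  intro a b hab
  have hi := congrFun hab i
  cases a <;> cases b <;> simp only [gsPi, reduceCtorEq, GS.vert.injEq] at hi ⊢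
  exact he (funext fun i => GS.vert.inj (congrFun hab i))

theorem gsPi_exists_eq_zero_iff [Nonempty I] (e : I → U → V) (b : GS U) :
    (∃ i, gsPi e b i = GS.zero) ↔ b = GS.zero := by
  cases b <;> simp [gsPi]

theorem isHomImageOfSub_pi_of_isInducedEmbedding [Nonempty I] (e : I → U → V)
    (he : (fun u i => e i u).Injective) (hE : ∀ u u', EU u u' ↔ ∀ i, EV (e i u) (e i u')) :
    IsHomImageOfSub
      (fun f g : I → GS V => fun i => gsAdd (f i) (g i))
      (fun f g : I → GS V => fun i => gsMul EV (f i) (g i))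
      gsAdd (gsMul EU) := by
  refine isHomImageOfSub_of_rees (ψ := gsPi e) (b₀ := GS.zero) (Z := {x | ∃ i, x i = GS.zero})
    (gsPi_injective he) (gsPi_exists_eq_zero_iff e)
    (fun z ⟨i, hi⟩ x =>
      ⟨⟨i, by simp only [hi, gsAdd_zero_left]⟩, ⟨i, by simp only [hi, gsAdd_zero_right]⟩⟩)
    (fun z ⟨i, hi⟩ x =>
      ⟨⟨i, by simp only [hi, gsMul_zero_left]⟩, ⟨i, by simp only [hi, gsMul_zero_right]⟩⟩)
    (fun b => ⟨gsAdd_zero_left b, gsAdd_zero_right b⟩)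
    (fun b => ⟨gsMul_zero_left b, gsMul_zero_right b⟩) (fun b b' => ?_) (fun b b' => ?_)
  · by_cases h : b = b'
    · subst h
      exact Or.inl (funext fun i => by simp only [gsAdd_self])
    · obtain ⟨i, hi⟩ := Function.ne_iff.mp ((gsPi_injective he).ne h)
      exact Or.inr ⟨gsAdd_of_ne h, i, gsAdd_of_ne hi⟩
  · cases b <;> cases b' <;> try exact Or.inl (funext fun i => rfl)
    case vert.vert u u' =>
    by_cases h : EU u u'
    · exact Or.inl (funext fun i => by
        simp only [gsPi, gsMul_vert_of_adj h, gsMul_vert_of_adj ((hE u u').mp h i)])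
    · obtain ⟨i, hi⟩ := not_forall.mp (mt (hE u u').mpr h)
      exact Or.inr ⟨gsMul_vert_of_not_adj h, i, by simp only [gsPi, gsMul_vert_of_not_adj hi]⟩

end InducedEmbedding

section PathUnion

variable {m n : ℕ}

def pathUnionEmbedding (m n : ℕ) (i : Fin m) : Fin (n + 1) ⊕ (Fin m × Fin n) → Fin (n + 1)
  | Sum.inl j => j
  | Sum.inr (k, j) => if i = k then j.succ else j.castSucc

theorem val_pathUnionEmbedding_inl (i : Fin m) (j : Fin (n + 1)) :
    (pathUnionEmbedding m n i (Sum.inl j) : ℕ) = j := rfl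

theorem val_pathUnionEmbedding_inr (i k : Fin m) (j : Fin n) :
    (pathUnionEmbedding m n i (Sum.inr (k, j)) : ℕ) = j + if i = k then 1 else 0 := by
  by_cases h : i = k <;> simp [pathUnionEmbedding, h]

theorem pathUnionEmbedding_injective (hm : 2 ≤ m) :
    (fun u i => pathUnionEmbedding m n i u).Injective := by
  have : Nontrivial (Fin m) := Fin.nontrivial_iff_two_le.mpr hm
  intro u u' h
  have hval (i : Fin m) : (pathUnionEmbedding m n i u : ℕ) = pathUnionEmbedding m n i u' :=
    congrArg Fin.val (congrFun h i)
  rcases u with j | ⟨k, j⟩ <;> rcases u' with j' | ⟨k', j'⟩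
  · exact congrArg Sum.inl (Fin.ext (hval (Classical.arbitrary _)))
  · obtain ⟨i, hi⟩ := exists_ne k'
    have h₁ := hval i
    have h₂ := hval k'
    simp only [val_pathUnionEmbedding_inl, val_pathUnionEmbedding_inr, if_pos, if_neg hi]
      at h₁ h₂
    omega
  · obtain ⟨i, hi⟩ := exists_ne k
    have h₁ := hval i
    have h₂ := hval k
    simp only [val_pathUnionEmbedding_inl, val_pathUnionEmbedding_inr, if_pos, if_neg hi]
      at h₁ h₂
    omega
  · have h₁ := hval k
    have h₂ := hval k'
    by_cases hk : k = k'
    · subst hk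
      simp only [val_pathUnionEmbedding_inr, if_pos] at h₁
      rw [Fin.ext (by omega : (j : ℕ) = j')]
    · simp only [val_pathUnionEmbedding_inr, if_pos, if_neg hk, if_neg (Ne.symm hk)] at h₁ h₂
      omega

theorem unionPathE19_iff_forall_pathE (hm : 2 ≤ m) (u u' : Fin (n + 1) ⊕ (Fin m × Fin n)) :
    unionPathE19 m n u u' ↔
      ∀ i, pathE (n + 1) (pathUnionEmbedding m n i u) (pathUnionEmbedding m n i u') := by
  have : Nontrivial (Fin m) := Fin.nontrivial_iff_two_le.mpr hm
  simp only [pathE]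
  rcases u with j | ⟨k, j⟩ <;> rcases u' with j' | ⟨k', j'⟩ <;>
    simp only [unionPathE19, val_pathUnionEmbedding_inl, val_pathUnionEmbedding_inr]
  · simp only [forall_const]
  · refine iff_of_false id fun h => ?_
    obtain ⟨i, hi⟩ := exists_ne k'
    have h₁ := h i
    have h₂ := h k'
    simp only [if_pos, if_neg hi] at h₁ h₂
    omega
  · refine iff_of_false id fun h => ?_
    obtain ⟨i, hi⟩ := exists_ne k
    have h₁ := h i
    have h₂ := h k
    simp only [if_pos, if_neg hi] at h₁ h₂
    omega
  · constructor
    · rintro ⟨rfl, hj⟩ i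
      split_ifs <;> omega
    · intro h
      have h₁ := h k
      have h₂ := h k'
      by_cases hk : k = k'
      · subst hk
        simp only [if_pos] at h₁
        exact ⟨rfl, by omega⟩
      · simp only [if_pos, if_neg hk, if_neg (Ne.symm hk)] at h₁ h₂
        omega

end PathUnion

theorem stmt_19_general (m n : ℕ) (hm : 2 ≤ m) :
    IsHomImageOfSub
      (fun f g : Fin m → GS (Fin (n + 1)) => fun i => gsAdd (f i) (g i))
      (fun f g : Fin m → GS (Fin (n + 1)) =>
        fun i => gsMul (pathE (n + 1)) (f i) (g i))
      (gsAdd : GS (Fin (n + 1) ⊕ (Fin m × Fin n)) →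
        GS (Fin (n + 1) ⊕ (Fin m × Fin n)) → GS (Fin (n + 1) ⊕ (Fin m × Fin n)))
      (gsMul (unionPathE19 m n)) :=
  have : Nonempty (Fin m) := ⟨⟨0, by omega⟩⟩
  isHomImageOfSub_pi_of_isInducedEmbedding (pathUnionEmbedding m n)
    (pathUnionEmbedding_injective hm) (unionPathE19_iff_forall_pathE hm)

/-- For `m, n ≥ 2`, the graph semiring of the disjoint union of one path
with `n + 1` vertices and `m` paths with `n` vertices each (the `{0, ω}`-direct union
`S_{p_{n+1}} ∘ ⋃_{1≤i≤m}^{ω} S_{p_n}`) is a homomorphic image of a subsemiring of the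
`m`-th direct power `S_{p_{n+1}}^m`. -/
theorem stmt_19 (m n : ℕ) (hm : 2 ≤ m) (hn : 2 ≤ n) :
    IsHomImageOfSub
      (fun f g : Fin m → GS (Fin (n + 1)) => fun i => gsAdd (f i) (g i))
      (fun f g : Fin m → GS (Fin (n + 1)) =>
        fun i => gsMul (pathE (n + 1)) (f i) (g i))
      (gsAdd : GS (Fin (n + 1) ⊕ (Fin m × Fin n)) →
        GS (Fin (n + 1) ⊕ (Fin m × Fin n)) → GS (Fin (n + 1) ⊕ (Fin m × Fin n)))
      (gsMul (unionPathE19 m n)) :=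
  stmt_19_general m n hm
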